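/- Let α ∈ (0,1) and let Ω be a bounded open subset of ℝ^n of class C^{1,α}. If u ∈ C^{1,α}(Ω̄), then the distributional normal derivative ∂_ν u (defined by ⟨∂_ν u, v⟩ = ∫_{∂Ω} u S₊[v] dσ + ⟨E^♯[Δu], 𝒢_{d,+}[v]⟩ for v ∈ C^{1,α}(∂Ω)) coincides with the functional associated to the classical normal derivative: ⟨∂_ν u, v⟩ = ∫_{∂Ω} (∂u/∂ν) v dσ for all v ∈ C^{1,α}(∂Ω). -/

import Mathlib

open MeasureTheory

noncomputable section

/-- `f` is `α`-Hölder continuous on the set `S`. -/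
def MemHol (n : ℕ) (α : ℝ) (S : Set (EuclideanSpace ℝ (Fin n)))
    (f : EuclideanSpace ℝ (Fin n) → ℝ) : Prop :=
  ContinuousOn f S ∧ ∃ C : ℝ, ∀ x ∈ S, ∀ y ∈ S, |f x - f y| ≤ C * ‖x - y‖ ^ α

/-- The `α`-Hölder norm on the set `S`: sup norm plus Hölder seminorm. -/
noncomputable def holderNorm (n : ℕ) (α : ℝ) (S : Set (EuclideanSpace ℝ (Fin n)))
    (f : EuclideanSpace ℝ (Fin n) → ℝ) : ℝ :=
  sSup ((fun x => |f x|) '' S) +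
    sSup {c | ∃ x ∈ S, ∃ y ∈ S, x ≠ y ∧ c = |f x - f y| / ‖x - y‖ ^ α}

/-- Partial derivative in the `j`-th coordinate direction. -/
def pd (n : ℕ) (j : Fin n) (φ : EuclideanSpace ℝ (Fin n) → ℝ) (x : EuclideanSpace ℝ (Fin n)) : ℝ :=
  fderiv ℝ φ x (EuclideanSpace.single j 1)

/-- Test functions on the open set `Ω`. -/
def IsTest (n : ℕ) (Ω : Set (EuclideanSpace ℝ (Fin n))) (φ : EuclideanSpace ℝ (Fin n) → ℝ) : Prop :=
  ContDiff ℝ (⊤ : ℕ∞) φ ∧ HasCompactSupport φ ∧ tsupport φ ⊆ Ω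

/-- The action on a test function `φ` of the distribution `f₀ + ∑_j ∂f_j/∂x_j`. -/
noncomputable def xiAct (n : ℕ) (Ω : Set (EuclideanSpace ℝ (Fin n)))
    (f0 : EuclideanSpace ℝ (Fin n) → ℝ) (fv : Fin n → EuclideanSpace ℝ (Fin n) → ℝ)
    (φ : EuclideanSpace ℝ (Fin n) → ℝ) : ℝ :=
  (∫ x in Ω, f0 x * φ x) - ∑ j, ∫ x in Ω, fv j x * pd n j φ x

/-- `T` belongs to `C^{−1,α}(Ω̄)`: it is the distribution `f₀ + ∑_j ∂f_j/∂x_j` for some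
`α`-Hölder functions `f₀, …, f_n` on `Ω̄`. -/
def IsRep (n : ℕ) (α : ℝ) (Ω : Set (EuclideanSpace ℝ (Fin n)))
    (T : (EuclideanSpace ℝ (Fin n) → ℝ) → ℝ) : Prop :=
  ∃ f0 fv, MemHol n α (closure Ω) f0 ∧ (∀ j, MemHol n α (closure Ω) (fv j)) ∧
    ∀ φ, IsTest n Ω φ → T φ = xiAct n Ω f0 fv φ

/-- The `C^{−1,α}(Ω̄)` norm: infimum of the sums of the Hölder norms over all representations. -/
noncomputable def cnorm (n : ℕ) (α : ℝ) (Ω : Set (EuclideanSpace ℝ (Fin n)))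
    (T : (EuclideanSpace ℝ (Fin n) → ℝ) → ℝ) : ℝ :=
  sInf {c | ∃ f0 fv, MemHol n α (closure Ω) f0 ∧ (∀ j, MemHol n α (closure Ω) (fv j)) ∧
    (∀ φ, IsTest n Ω φ → T φ = xiAct n Ω f0 fv φ) ∧
    c = holderNorm n α (closure Ω) f0 + ∑ j, holderNorm n α (closure Ω) (fv j)}

/-- Data encoding that the bounded open set `Ω` is a Lipschitz domain: a surface measure `σ`
on `∂Ω`, an outward unit normal field `ν`, and the validity of the divergence theorem. -/
structure DivData (n : ℕ) (Ω : Set (EuclideanSpace ℝ (Fin n))) where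
  σ : Measure (EuclideanSpace ℝ (Fin n))
  ν : EuclideanSpace ℝ (Fin n) → EuclideanSpace ℝ (Fin n)
  finite : IsFiniteMeasure σ
  unit : ∀ x ∈ frontier Ω, ‖ν x‖ = 1
  div_thm : ∀ F : EuclideanSpace ℝ (Fin n) → EuclideanSpace ℝ (Fin n),
    ContinuousOn F (closure Ω) → ContDiffOn ℝ 1 F Ω →
    IntegrableOn (fun x => ∑ j, fderiv ℝ F x (EuclideanSpace.single j 1) j) Ω volume →
    ∫ x in Ω, (∑ j, fderiv ℝ F x (EuclideanSpace.single j 1) j)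
      = ∫ x in frontier Ω, (∑ j, F x j * ν x j) ∂σ


/-- Iterated partial derivatives along a list of coordinate directions. -/
noncomputable def pderivList {n : ℕ} :
    List (Fin n) → (EuclideanSpace ℝ (Fin n) → ℝ) → EuclideanSpace ℝ (Fin n) → ℝ
  | [], f => f
  | (j :: l), f => fun x => fderiv ℝ (pderivList l f) x (EuclideanSpace.single j 1)

/-- For `u ∈ C^{1,α}(Ω̄)` the distributional normal derivative
`⟨∂_ν u, v⟩ = ∫_{∂Ω} u S₊[v] dσ + ⟨E^♯[Δu], 𝒢_{d,+}[v]⟩` coincides with the classical one: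
`⟨∂_ν u, v⟩ = ∫_{∂Ω} (∂u/∂ν) v dσ` for all `v ∈ C^{1,α}(∂Ω)`.  Here `w = 𝒢_{d,+}[v]` is the
harmonic extension of `v` (a `C^{1,α}(Ω̄)` function, with continuous boundary gradient `W`),
`S₊[v] = ⟪∇w, ν⟫` on `∂Ω`, `U` is the continuous extension of `∇u` to `Ω̄`, and
`⟨E^♯[Δu], w⟩` is computed from the representation `Δu = ∑_j ∂_j (∂_j u)`. -/
theorem canonical_normal_derivative_eq_classical (n : ℕ) (α : ℝ) (hα : 0 < α) (hα1 : α < 1)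
    (Ω : Set (EuclideanSpace ℝ (Fin n))) (hO : IsOpen Ω) (hB : Bornology.IsBounded Ω)
    (D : DivData n Ω)
    -- `u ∈ C^{1,α}(Ω̄)`, with gradient extension `U` of class `C^{0,α}(Ω̄)`
    (u : EuclideanSpace ℝ (Fin n) → ℝ) (U : EuclideanSpace ℝ (Fin n) → EuclideanSpace ℝ (Fin n))
    (hu : ContinuousOn u (closure Ω)) (huC : ContDiffOn ℝ 1 u Ω)
    (huU : ∀ x ∈ Ω, ∀ j, U x j = pd n j u x)
    (hUc : ∀ j, MemHol n α (closure Ω) (fun x => U x j))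
    -- `w = 𝒢_{d,+}[v] ∈ C^{1,α}(Ω̄)` is harmonic in `Ω` with trace `v` on `∂Ω`,
    -- with gradient extension `W` of class `C^{0,α}(Ω̄)`
    (v w : EuclideanSpace ℝ (Fin n) → ℝ)
    (W : EuclideanSpace ℝ (Fin n) → EuclideanSpace ℝ (Fin n))
    (hw : ContinuousOn w (closure Ω)) (hwC : ContDiffOn ℝ (⊤ : ℕ∞) w Ω)
    (hwW : ∀ x ∈ Ω, ∀ j, W x j = pd n j w x)
    (hWc : ∀ j, MemHol n α (closure Ω) (fun x => W x j))
    (hharm : ∀ x ∈ Ω, ∑ j : Fin n, pderivList [j, j] w x = 0)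
    (htr : ∀ x ∈ frontier Ω, w x = v x) :
    (∫ x in frontier Ω, u x * (∑ j, W x j * D.ν x j) ∂D.σ)
      + ((∫ x in frontier Ω, (∑ j, D.ν x j * U x j) * w x ∂D.σ)
          - ∑ j, ∫ x in Ω, U x j * W x j)
      = ∫ x in frontier Ω, (∑ j, U x j * D.ν x j) * v x ∂D.σ := by
  classical
  have hclC : IsCompact (closure Ω) := hB.isCompact_closure
  have hsub : Ω ⊆ closure Ω := subset_closure
  -- continuity of the products U_j * W_j
  have hUWc : ∀ j : Fin n, ContinuousOn (fun x => U x j * W x j) (closure Ω) :=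
    fun j => (hUc j).1.mul (hWc j).1
  have hsumc : ContinuousOn (fun x => ∑ j, U x j * W x j) (closure Ω) := by
    apply continuousOn_finset_sum
    intro j _
    exact hUWc j
  have hint : ∀ j : Fin n, IntegrableOn (fun x => U x j * W x j) Ω volume :=
    fun j => ((hUWc j).integrableOn_compact hclC).mono_set hsub
  have hintsum : IntegrableOn (fun x => ∑ j, U x j * W x j) Ω volume :=
    (hsumc.integrableOn_compact hclC).mono_set hsub
  -- the smooth representative of W on Ω
  set e : EuclideanSpace ℝ (Fin n) ≃L[ℝ] (Fin n → ℝ) :=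
    PiLp.continuousLinearEquiv 2 ℝ (fun _ : Fin n => ℝ) with he
  set G : EuclideanSpace ℝ (Fin n) → EuclideanSpace ℝ (Fin n) :=
    fun x => e.symm (fun j => pd n j w x) with hG
  have hfd : ContDiffOn ℝ 1 (fderiv ℝ w) Ω := hwC.fderiv_of_isOpen hO (WithTop.coe_le_coe.2 le_top)
  have hGsm : ContDiffOn ℝ 1 G Ω := by
    apply e.symm.contDiff.comp_contDiffOn
    apply contDiffOn_pi.2
    intro j
    exact hfd.clm_apply contDiffOn_const
  have hWG : Set.EqOn W G Ω := by
    intro x hx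
    have : ∀ j, W x j = G x j := by
      intro j
      simpa [hG, he] using hwW x hx j
    ext j; exact this j
  have hGc : ContinuousOn G Ω := hGsm.continuousOn
  have hWcont : ContinuousOn W (closure Ω) := by
    have : ContinuousOn (fun x => (fun j => W x j : Fin n → ℝ)) (closure Ω) := by
      apply continuousOn_pi.2
      intro j
      exact (hWc j).1
    exact e.symm.continuous.comp_continuousOn this
  -- the vector field F = u • W
  set F : EuclideanSpace ℝ (Fin n) → EuclideanSpace ℝ (Fin n) := fun x => u x • W x with hF
  have hFc : ContinuousOn F (closure Ω) := hu.smul hWcont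
  have hFsm : ContDiffOn ℝ 1 F Ω := by
    have : ContDiffOn ℝ 1 (fun x => u x • G x) Ω := huC.smul hGsm
    exact this.congr fun x hx => by show u x • W x = u x • G x; rw [hWG hx]
  -- key: divergence of F equals ∑ U_j W_j on Ω
  have key : ∀ x ∈ Ω, (∑ j, fderiv ℝ F x (EuclideanSpace.single j 1) j)
      = ∑ j, U x j * W x j := by
    intro x hx
    have hmem : Ω ∈ nhds x := hO.mem_nhds hx
    have hWGe : W =ᶠ[nhds x] G := Filter.eventuallyEq_of_mem hmem hWG
    have du : DifferentiableAt ℝ u x :=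
      ((huC.differentiableOn one_ne_zero) x hx).differentiableAt hmem
    have dG : DifferentiableAt ℝ G x :=
      ((hGsm.differentiableOn one_ne_zero) x hx).differentiableAt hmem
    have dW : DifferentiableAt ℝ W x := dG.congr_of_eventuallyEq hWGe
    have hfW : fderiv ℝ W x = fderiv ℝ G x := hWGe.fderiv_eq
    have hsmul : fderiv ℝ F x = u x • fderiv ℝ W x + (fderiv ℝ u x).smulRight (W x) :=
      fderiv_smul du dW
    -- component computation for G
    have hGcomp : ∀ j : Fin n, (fderiv ℝ G x (EuclideanSpace.single j 1)) j
        = pderivList [j, j] w x := by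
      intro j
      have hproj : (fun y => pd n j w y)
          = fun y => (EuclideanSpace.proj (𝕜 := ℝ) j) (G y) := by
        funext y
        simp [hG, he, pd]
      have h1 : fderiv ℝ (fun y => pd n j w y) x
          = (EuclideanSpace.proj (𝕜 := ℝ) j).comp (fderiv ℝ G x) := by
        rw [hproj]
        have hcomp := fderiv_comp (g := (EuclideanSpace.proj (𝕜 := ℝ) j : EuclideanSpace ℝ (Fin n) → ℝ)) (f := G) x ((EuclideanSpace.proj (𝕜 := ℝ) j).differentiableAt) dG
        rw [ContinuousLinearMap.fderiv] at hcomp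
        exact hcomp
      have h2 : pderivList [j, j] w x
          = fderiv ℝ (fun y => pd n j w y) x (EuclideanSpace.single j 1) := by
        simp only [pderivList]
        rfl
      rw [h2, h1]
      rfl
    calc (∑ j, fderiv ℝ F x (EuclideanSpace.single j 1) j)
        = ∑ j, (u x * pderivList [j, j] w x + pd n j u x * W x j) := by
          apply Finset.sum_congr rfl
          intro j _
          rw [hsmul]
          simp only [ContinuousLinearMap.add_apply, ContinuousLinearMap.coe_smul',
            Pi.smul_apply, ContinuousLinearMap.smulRight_apply]
          rw [hfW]
          have := hGcomp j
          simp only [PiLp.add_apply, PiLp.smul_apply, smul_eq_mul] at *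
          rw [this]
          rfl
      _ = u x * (∑ j, pderivList [j, j] w x) + ∑ j, U x j * W x j := by
          rw [Finset.sum_add_distrib, Finset.mul_sum]
          congr 1
          apply Finset.sum_congr rfl
          intro j _
          rw [huU x hx j]
      _ = ∑ j, U x j * W x j := by rw [hharm x hx]; ring
  -- divergence theorem
  have hdivint : IntegrableOn
      (fun x => ∑ j, fderiv ℝ F x (EuclideanSpace.single j 1) j) Ω volume := by
    apply hintsum.congr_fun _ hO.measurableSet
    intro x hx
    exact (key x hx).symm
  have hdiv := D.div_thm F hFc hFsm hdivint
  have hdivL : ∫ x in Ω, (∑ j, fderiv ℝ F x (EuclideanSpace.single j 1) j)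
      = ∑ j, ∫ x in Ω, U x j * W x j := by
    rw [MeasureTheory.setIntegral_congr_fun hO.measurableSet key]
    exact MeasureTheory.integral_finset_sum _ (fun j _ => hint j)
  have hdivR : ∫ x in frontier Ω, (∑ j, F x j * D.ν x j) ∂D.σ
      = ∫ x in frontier Ω, u x * (∑ j, W x j * D.ν x j) ∂D.σ := by
    apply MeasureTheory.setIntegral_congr_fun isClosed_frontier.measurableSet
    intro x _
    simp only [hF, PiLp.smul_apply, smul_eq_mul, Finset.mul_sum, mul_assoc]
  have hA : (∫ x in frontier Ω, u x * (∑ j, W x j * D.ν x j) ∂D.σ)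
      = ∑ j, ∫ x in Ω, U x j * W x j := by
    rw [← hdivR, ← hdiv, hdivL]
  have hBv : (∫ x in frontier Ω, (∑ j, D.ν x j * U x j) * w x ∂D.σ)
      = ∫ x in frontier Ω, (∑ j, U x j * D.ν x j) * v x ∂D.σ := by
    apply MeasureTheory.setIntegral_congr_fun isClosed_frontier.measurableSet
    intro x hx
    show (∑ j, D.ν x j * U x j) * w x = (∑ j, U x j * D.ν x j) * v x
    rw [htr x hx]
    congr 1
    apply Finset.sum_congr rfl
    intro j _
    ring
  rw [hA, hBv]
  ring


end
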